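/- The normed space c₀^λ(F̂) with norm ‖x‖ = sup_n |F̄_n(x)| is separable. -/

import Mathlib

open Filter Finset

noncomputable def fibR : ℕ → ℝ
  | 0 => 1
  | 1 => 1
  | (n + 2) => fibR (n + 1) + fibR n

noncomputable def Fhat (x : ℕ → ℝ) (n : ℕ) : ℝ :=
  fibR n / fibR (n + 1) * x n - fibR (n + 1) / fibR n * (if n = 0 then 0 else x (n - 1))

noncomputable def Fbar (Λ : ℕ → ℝ) (x : ℕ → ℝ) (n : ℕ) : ℝ :=
  (1 / Λ n) * ∑ k ∈ Finset.range (n + 1),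
    (Λ k - if k = 0 then 0 else Λ (k - 1)) *
      (fibR k / fibR (k + 1) * x k -
        fibR (k + 1) / fibR k * (if k = 0 then 0 else x (k - 1)))

/-!
`F̄(x)` is the Riesz mean, with weights `λ_k − λ_{k-1}`, of the sequence `F̂ x`, and `F̂` is a
triangular bijection of `ℝ^ℕ`. So it suffices to approximate a sequence `u` whose Riesz means `M_n`
tend to `0`, uniformly in `n`, by finitely supported rational sequences. Take `N` with
`|M_n(u)| ≤ ε/3` for `n ≥ N`, and rationals `q_k` within `ε/3` of `u_k` for `k ≤ N`. The head
`(u − q)·1_{k ≤ N}` has all means `≤ ε/3`, while the means of the tail `u·1_{k > N}` are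
`(λ_n M_n(u) − λ_N M_N(u))/λ_n`, of size at most `2ε/3`. The `F̂`-preimages of finitely supported
rational sequences are countable, and lie in `c₀^λ(F̂)` because `λ_n → ∞`.
-/

open Topology

lemma fibR_pos : ∀ n, 0 < fibR n
  | 0 => by norm_num [fibR]
  | 1 => by norm_num [fibR]
  | n + 2 => by
      rw [fibR]
      exact add_pos (fibR_pos (n + 1)) (fibR_pos n)

lemma Fhat_sub (x y : ℕ → ℝ) (k : ℕ) :
    Fhat (fun i => x i - y i) k = Fhat x k - Fhat y k := by
  simp only [Fhat]
  split_ifs <;> ring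

noncomputable def FhatInv (v : ℕ → ℝ) : ℕ → ℝ
  | 0 => v 0
  | k + 1 => (v (k + 1) + fibR (k + 2) / fibR (k + 1) * FhatInv v k) *
      (fibR (k + 2) / fibR (k + 1))

lemma Fhat_FhatInv (v : ℕ → ℝ) : ∀ k, Fhat (FhatInv v) k = v k
  | 0 => by norm_num [Fhat, FhatInv, fibR]
  | k + 1 => by
      have h1 := (fibR_pos (k + 1)).ne'
      have h2 := (fibR_pos (k + 2)).ne'
      simp only [Fhat, FhatInv, Nat.succ_ne_zero, if_false, Nat.add_sub_cancel]
      field_simp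
      ring

section RieszMean

variable (Λ : ℕ → ℝ)

noncomputable def lambdaDiff (k : ℕ) : ℝ :=
  Λ k - if k = 0 then 0 else Λ (k - 1)

noncomputable def rieszMean (v : ℕ → ℝ) (n : ℕ) : ℝ :=
  (Λ n)⁻¹ * ∑ k ∈ range (n + 1), lambdaDiff Λ k * v k

lemma Fbar_eq_rieszMean_Fhat (x : ℕ → ℝ) : Fbar Λ x = rieszMean Λ (Fhat x) := by
  funext n
  simp only [Fbar, rieszMean, one_div]
  rfl

lemma sum_range_lambdaDiff (n : ℕ) : ∑ k ∈ range (n + 1), lambdaDiff Λ k = Λ n := by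
  induction n with
  | zero => simp [lambdaDiff]
  | succ m ih =>
      rw [sum_range_succ, ih]
      simp [lambdaDiff]

lemma lambdaDiff_nonneg {Λ : ℕ → ℝ} (hmono : Monotone Λ) (h0 : 0 ≤ Λ 0) (k : ℕ) :
    0 ≤ lambdaDiff Λ k := by
  cases k with
  | zero => simpa [lambdaDiff] using h0
  | succ m => simpa [lambdaDiff] using hmono m.le_succ

lemma rieszMean_add (v w : ℕ → ℝ) (n : ℕ) :
    rieszMean Λ (fun k => v k + w k) n = rieszMean Λ v n + rieszMean Λ w n := by
  simp only [rieszMean, mul_add, sum_add_distrib]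

variable {Λ}

lemma abs_rieszMean_le (hmono : Monotone Λ) (hpos : ∀ n, 0 < Λ n) {v : ℕ → ℝ} {c : ℝ}
    {n : ℕ} (hv : ∀ k ≤ n, |v k| ≤ c) : |rieszMean Λ v n| ≤ c := by
  have hd := lambdaDiff_nonneg hmono (hpos 0).le
  have hsum : |∑ k ∈ range (n + 1), lambdaDiff Λ k * v k| ≤ c * Λ n :=
    calc |∑ k ∈ range (n + 1), lambdaDiff Λ k * v k|
        ≤ ∑ k ∈ range (n + 1), lambdaDiff Λ k * |v k| := by
          refine (abs_sum_le_sum_abs _ _).trans_eq (sum_congr rfl fun k _ => ?_)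
          rw [abs_mul, abs_of_nonneg (hd k)]
      _ ≤ ∑ k ∈ range (n + 1), lambdaDiff Λ k * c :=
          sum_le_sum fun k hk => mul_le_mul_of_nonneg_left
            (hv k (Nat.lt_succ_iff.mp (mem_range.mp hk))) (hd k)
      _ = c * Λ n := by rw [← sum_mul, sum_range_lambdaDiff, mul_comm]
  rw [rieszMean, abs_mul, abs_inv, abs_of_pos (hpos n), inv_mul_le_iff₀ (hpos n), mul_comm]
  exact hsum

lemma tendsto_rieszMean_of_eventually_eq_zero (hlim : Tendsto Λ atTop atTop) {v : ℕ → ℝ}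
    (hv : ∀ᶠ k in atTop, v k = 0) : Tendsto (rieszMean Λ v) atTop (𝓝 0) := by
  obtain ⟨N, hN⟩ := eventually_atTop.mp hv
  set C := ∑ k ∈ range N, lambdaDiff Λ k * v k
  have hconst : ∀ n ≥ N, rieszMean Λ v n = (Λ n)⁻¹ * C := fun n hn => by
    rw [rieszMean, ← sum_subset (range_subset_range.mpr (by omega : N ≤ n + 1))
      fun k _ hk => by rw [hN k (by simpa using hk), mul_zero]]
  have hlim0 : Tendsto (fun n => (Λ n)⁻¹ * C) atTop (𝓝 0) := by
    simpa using (tendsto_inv_atTop_zero.comp hlim).mul_const C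
  exact hlim0.congr' (eventually_atTop.mpr ⟨N, fun n hn => (hconst n hn).symm⟩)

lemma abs_rieszMean_tail_le (hmono : Monotone Λ) (hpos : ∀ n, 0 < Λ n) {u : ℕ → ℝ} {N : ℕ}
    {δ : ℝ} (hu : ∀ m ≥ N, |rieszMean Λ u m| ≤ δ) (n : ℕ) :
    |rieszMean Λ (fun k => if N < k then u k else 0) n| ≤ 2 * δ := by
  have hδ : 0 ≤ δ := (abs_nonneg _).trans (hu N le_rfl)
  rcases le_or_gt n N with hnN | hNn
  · have hzero : rieszMean Λ (fun k => if N < k then u k else 0) n = 0 := by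
      refine mul_eq_zero_of_right _ (sum_eq_zero fun k hk => ?_)
      dsimp only
      rw [if_neg (by simp at hk; omega), mul_zero]
    rw [hzero, abs_zero]
    positivity
  have hsplit : rieszMean Λ (fun k => if N < k then u k else 0) n =
      rieszMean Λ u n - Λ N / Λ n * rieszMean Λ u N := by
    have hhead : ∑ k ∈ range (N + 1), lambdaDiff Λ k * (if N < k then u k else 0) = 0 :=
      sum_eq_zero fun k hk => by rw [if_neg (by simp at hk; omega), mul_zero]
    have htail : ∑ k ∈ Ico (N + 1) (n + 1), lambdaDiff Λ k * (if N < k then u k else 0) =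
        ∑ k ∈ Ico (N + 1) (n + 1), lambdaDiff Λ k * u k :=
      sum_congr rfl fun k hk => by rw [if_pos (by simp at hk; omega)]
    rw [rieszMean, ← sum_range_add_sum_Ico _ (by omega : N + 1 ≤ n + 1), hhead, htail,
      sum_Ico_eq_sub _ (by omega), rieszMean, rieszMean]
    field_simp [(hpos N).ne', (hpos n).ne']
    ring
  have hratio : Λ N / Λ n ≤ 1 := (div_le_one (hpos n)).mpr (hmono hNn.le)
  calc |rieszMean Λ (fun k => if N < k then u k else 0) n|
      ≤ |rieszMean Λ u n| + Λ N / Λ n * |rieszMean Λ u N| := by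
        rw [hsplit]
        refine (abs_sub _ _).trans_eq ?_
        rw [abs_mul, abs_of_pos (div_pos (hpos N) (hpos n))]
    _ ≤ δ + 1 * δ := by
        gcongr
        exacts [hu n hNn.le, hu N le_rfl]
    _ = 2 * δ := by ring

lemma exists_finsupp_rat_abs_rieszMean_sub_le (hmono : Monotone Λ) (hpos : ∀ n, 0 < Λ n)
    {u : ℕ → ℝ} (hu : Tendsto (rieszMean Λ u) atTop (𝓝 0)) {ε : ℝ} (hε : 0 < ε) :
    ∃ w : ℕ →₀ ℚ, ∀ n, |rieszMean Λ (fun k => u k - w k) n| ≤ ε := by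
  obtain ⟨N, hN⟩ : ∃ N, ∀ m ≥ N, |rieszMean Λ u m| ≤ ε / 3 := by
    obtain ⟨N, hN⟩ := Metric.tendsto_atTop.mp hu (ε / 3) (by positivity)
    exact ⟨N, fun m hm => by simpa [Real.dist_eq] using (hN m hm).le⟩
  choose q hq using fun k => exists_rat_near (u k) (show 0 < ε / 3 by positivity)
  let w : ℕ →₀ ℚ := Finsupp.onFinset (range (N + 1)) (fun k => if k ≤ N then q k else 0)
    fun k hk => mem_range.mpr (by by_contra h; exact hk (if_neg (by omega)))
  have hsplit : (fun k => u k - w k) =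
      fun k => (if N < k then u k else 0) + (if k ≤ N then u k - q k else 0) := by
    funext k
    simp only [w, Finsupp.onFinset_apply]
    split_ifs <;> first | omega | push_cast; ring
  refine ⟨w, fun n => ?_⟩
  have hhead : |rieszMean Λ (fun k => if k ≤ N then u k - q k else 0) n| ≤ ε / 3 :=
    abs_rieszMean_le hmono hpos fun k _ => by
      split_ifs
      exacts [(hq k).le, by rw [abs_zero]; positivity]
  calc |rieszMean Λ (fun k => u k - w k) n|
      ≤ |rieszMean Λ (fun k => if N < k then u k else 0) n| +
          |rieszMean Λ (fun k => if k ≤ N then u k - q k else 0) n| := by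
        rw [hsplit, rieszMean_add]
        exact abs_add_le _ _
    _ ≤ 2 * (ε / 3) + ε / 3 := add_le_add (abs_rieszMean_tail_le hmono hpos hN n) hhead
    _ = ε := by ring

end RieszMean

theorem c0lambdaF_separable (Λ : ℕ → ℝ) (hmono : StrictMono Λ) (hpos : ∀ k, 0 < Λ k)
    (hlim : Tendsto Λ atTop atTop) :
    ∃ D : Set (ℕ → ℝ), D.Countable ∧
      (∀ y ∈ D, Tendsto (Fbar Λ y) atTop (nhds 0)) ∧
      ∀ x : ℕ → ℝ, Tendsto (Fbar Λ x) atTop (nhds 0) →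
        ∀ ε : ℝ, 0 < ε → ∃ y ∈ D, ∀ n, |Fbar Λ (fun i => x i - y i) n| ≤ ε := by
  refine ⟨Set.range fun w : ℕ →₀ ℚ => FhatInv fun k => (w k : ℝ), Set.countable_range _, ?_, ?_⟩
  · rintro _ ⟨w, rfl⟩
    rw [Fbar_eq_rieszMean_Fhat, funext (Fhat_FhatInv _)]
    refine tendsto_rieszMean_of_eventually_eq_zero hlim ?_
    rw [← Nat.cofinite_eq_atTop]
    exact w.support.eventually_cofinite_notMem.mono fun k hk => by simpa using hk
  · intro x hx ε hε
    rw [Fbar_eq_rieszMean_Fhat] at hx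
    obtain ⟨w, hw⟩ := exists_finsupp_rat_abs_rieszMean_sub_le hmono.monotone hpos hx hε
    refine ⟨_, ⟨w, rfl⟩, fun n => ?_⟩
    rw [Fbar_eq_rieszMean_Fhat, funext (Fhat_sub x _), funext (Fhat_FhatInv _)]
    exact hw n
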